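/- Let Z be a real n×p matrix. Then for every real n×p matrix Q with QᵀQ = I, trace(QᵀZ) ≤ trace(sqrt(ZᵀZ)), where sqrt(ZᵀZ) is the positive semidefinite square root of the positive semidefinite matrix ZᵀZ. -/

import Mathlib

/-! Diagonalize `Zᵀ Z = V D Vᵀ` with `V` orthogonal. Then `trace (Qᵀ Z) = trace ((QV)ᵀ (ZV))`,
where `QV` still has orthonormal columns and the columns of `ZV` have squared norms `D i i`.
Cauchy–Schwarz bounds the `i`-th diagonal entry by `1 · √(D i i)`, and `∑ i, √(D i i)` is the
trace of `√(Zᵀ Z)`. -/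

open Matrix

open scoped ComplexOrder in
/-- The positive semidefinite square root of a positive semidefinite matrix
(the definition `Matrix.PosSemidef.sqrt` of the older Mathlib, since removed). -/
noncomputable def Matrix.PosSemidef.sqrt {n 𝕜 : Type*} [Fintype n] [DecidableEq n] [RCLike 𝕜]
    {A : Matrix n n 𝕜} (hA : A.PosSemidef) : Matrix n n 𝕜 :=
  hA.1.eigenvectorUnitary.1 * diagonal ((↑) ∘ (√·) ∘ hA.1.eigenvalues) *
  (star hA.1.eigenvectorUnitary : Matrix n n 𝕜)

namespace Matrix

variable {m n : Type*} [Fintype m]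

lemma transpose_mul_self_apply_self (A : Matrix m n ℝ) (i : n) :
    (Aᵀ * A) i i = ∑ k, A k i ^ 2 := by
  simp only [mul_apply, transpose_apply, sq]

lemma transpose_mul_apply_self_le_sqrt_mul_sqrt (A B : Matrix m n ℝ) (i : n) :
    (Aᵀ * B) i i ≤ √((Aᵀ * A) i i) * √((Bᵀ * B) i i) := by
  simpa only [transpose_mul_self_apply_self, mul_apply, transpose_apply, sq] using
    Real.sum_mul_le_sqrt_mul_sqrt Finset.univ (A · i) (B · i)

lemma trace_transpose_mul_le_of_transpose_mul_self_eq_one [Fintype n] [DecidableEq n]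
    {A : Matrix m n ℝ} (hA : Aᵀ * A = 1) (B : Matrix m n ℝ) :
    (Aᵀ * B).trace ≤ ∑ i, √((Bᵀ * B) i i) :=
  Finset.sum_le_sum fun i _ ↦ by
    simpa [hA] using transpose_mul_apply_self_le_sqrt_mul_sqrt A B i

open scoped ComplexOrder in
lemma PosSemidef.trace_sqrt [Fintype n] [DecidableEq n] {𝕜 : Type*} [RCLike 𝕜]
    {A : Matrix n n 𝕜} (hA : A.PosSemidef) : hA.sqrt.trace = ∑ i, (√(hA.1.eigenvalues i) : 𝕜) := by
  rw [PosSemidef.sqrt, trace_mul_cycle, Unitary.coe_star_mul_self, one_mul, trace_diagonal]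
  rfl

lemma IsHermitian.exists_transpose_mul_mul_eq_diagonal [Fintype n] [DecidableEq n]
    {A : Matrix n n ℝ} (hA : A.IsHermitian) :
    ∃ V : Matrix n n ℝ, V * Vᵀ = 1 ∧ Vᵀ * V = 1 ∧ Vᵀ * A * V = diagonal hA.eigenvalues := by
  refine ⟨hA.eigenvectorUnitary, ?_, ?_, ?_⟩ <;>
    simp only [← conjTranspose_eq_transpose_of_trivial, ← star_eq_conjTranspose]
  · exact Unitary.coe_mul_star_self _
  · exact Unitary.coe_star_mul_self _
  · simpa [Unitary.conjStarAlgAut_apply] using hA.conjStarAlgAut_star_eigenvectorUnitary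

end Matrix

/-- For any real `n × p` matrix `Z` and every `Q` with `Qᵀ Q = I`,
`trace(Qᵀ Z) ≤ trace(sqrt(Zᵀ Z))`, where `sqrt(Zᵀ Z)` is the positive semidefinite
square root of the positive semidefinite matrix `Zᵀ Z`. -/
theorem trace_orth_mul_le_trace_sqrt
    (n p : ℕ) (Z : Matrix (Fin n) (Fin p) ℝ)
    (hM : (Zᵀ * Z).PosSemidef) :
    ∀ Q : Matrix (Fin n) (Fin p) ℝ, Qᵀ * Q = 1 →
      (Qᵀ * Z).trace ≤ hM.sqrt.trace := by
  intro Q hQ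
  obtain ⟨V, hVVt, hVtV, hdiag⟩ := hM.1.exists_transpose_mul_mul_eq_diagonal
  have hQV : (Q * V)ᵀ * (Q * V) = 1 := by
    rw [transpose_mul, Matrix.mul_assoc, ← Matrix.mul_assoc Qᵀ, hQ, Matrix.one_mul, hVtV]
  have hZV : (Z * V)ᵀ * (Z * V) = diagonal hM.1.eigenvalues := by
    rw [← hdiag, transpose_mul]
    simp only [Matrix.mul_assoc]
  calc (Qᵀ * Z).trace = ((Q * V)ᵀ * (Z * V)).trace := by
        rw [transpose_mul, Matrix.mul_assoc, trace_mul_comm Vᵀ, Matrix.mul_assoc, Matrix.mul_assoc,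
          hVVt, Matrix.mul_one]
    _ ≤ ∑ i, √(((Z * V)ᵀ * (Z * V)) i i) :=
        trace_transpose_mul_le_of_transpose_mul_self_eq_one hQV _
    _ = hM.sqrt.trace := by
        rw [hZV, hM.trace_sqrt]
        simp
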